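/- arXiv:math/9601217 — 4 statements merged into one kernel-verified Lean document; each statement's English description precedes it below -/
import Mathlib

section
/- Let V be a finite-dimensional real vector space and μ₁,…,μ_N ∈ V* spanning V*. If for some x ∈ ℝ^N the polyhedron P(x) = {v | μ_i(v) + x_i ≥ 0 for all i} is non-empty and bounded, then the convex cone {∑_{i=1}^N c_i μ_i | c_i ≥ 0} equals all of V*. -/
/-!
A polytope has no recession directions: if `μ i v ≥ 0` for all `i`, the ray `p + t • v` stays in
`P(x)`, so `v = 0`. Separating the standard simplex in `ℝᴺ` from the subspace
`{(μ i v)ᵢ | v ∈ V}` then yields a relation `∑ cᵢ μᵢ = 0` with all `cᵢ > 0` (Stiemke's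
alternative). Adding a large multiple of this relation to any real combination `∑ bᵢ μᵢ` makes
all coefficients non-negative, and since the `μ i` span `V*` this reaches every functional.
-/

open Bornology

section

variable {ι : Type*}

lemma eq_zero_of_isBounded_of_add_smul_mem {V : Type*} [NormedAddCommGroup V]
    [NormedSpace ℝ V] {s : Set V} (hs : IsBounded s) {p v : V}
    (hray : ∀ t : ℝ, 0 ≤ t → p + t • v ∈ s) : v = 0 := by
  obtain ⟨R, hR⟩ := hs.exists_norm_le
  have hbound : ∀ t : ℝ, 0 ≤ t → t * ‖v‖ ≤ 2 * R := fun t ht => by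
    have hp := hR p (by simpa using hray 0 le_rfl)
    have hpt := hR _ (hray t ht)
    calc t * ‖v‖ = ‖(p + t • v) - p‖ := by
          rw [add_sub_cancel_left, norm_smul, Real.norm_of_nonneg ht]
      _ ≤ ‖p + t • v‖ + ‖p‖ := norm_sub_le _ _
      _ ≤ 2 * R := by linarith
  by_contra hv
  have hvpos : 0 < ‖v‖ := norm_pos_iff.mpr hv
  have hR0 : 0 ≤ R := by simpa using hbound 0 le_rfl
  have := hbound ((2 * R + 1) / ‖v‖) (by positivity)
  rw [div_mul_cancel₀ _ hvpos.ne'] at this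
  linarith

def polyhedron {V : Type*} [AddCommGroup V] [Module ℝ V] (μ : ι → V →ₗ[ℝ] ℝ) (x : ι → ℝ) :
    Set V :=
  {v | ∀ i, 0 ≤ μ i v + x i}

lemma add_smul_mem_polyhedron {V : Type*} [AddCommGroup V] [Module ℝ V]
    {μ : ι → V →ₗ[ℝ] ℝ} {x : ι → ℝ} {p v : V} (hp : p ∈ polyhedron μ x)
    (hv : ∀ i, 0 ≤ μ i v) {t : ℝ} (ht : 0 ≤ t) : p + t • v ∈ polyhedron μ x := fun i => by
  rw [map_add, map_smul, smul_eq_mul]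
  nlinarith [hp i, hv i]

lemma eq_zero_of_forall_nonneg_of_isBounded_polyhedron {V : Type*} [NormedAddCommGroup V]
    [NormedSpace ℝ V] {μ : ι → V →ₗ[ℝ] ℝ} {x : ι → ℝ} (hne : (polyhedron μ x).Nonempty)
    (hbd : IsBounded (polyhedron μ x)) {v : V} (hv : ∀ i, 0 ≤ μ i v) : v = 0 :=
  eq_zero_of_isBounded_of_add_smul_mem hbd fun _ ht =>
    add_smul_mem_polyhedron hne.some_mem hv ht

lemma LinearMap.eq_zero_of_lt_apply_of_mem {M : Type*} [AddCommGroup M] [Module ℝ M]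
    {f : M →ₗ[ℝ] ℝ} {W : Submodule ℝ M} {a : ℝ} (h : ∀ b ∈ W, a < f b) {b : M} (hb : b ∈ W) :
    f b = 0 := by
  by_contra hfb
  have := h ((a / f b) • b) (W.smul_mem _ hb)
  rw [map_smul, smul_eq_mul, div_mul_cancel₀ _ hfb] at this
  exact lt_irrefl _ this

lemma exists_pos_sum_smul_eq_zero [Fintype ι] {V : Type*} [AddCommGroup V] [Module ℝ V]
    (μ : ι → V →ₗ[ℝ] ℝ) (h : ∀ v, (∀ i, 0 ≤ μ i v) → v = 0) :
    ∃ c : ι → ℝ, (∀ i, 0 < c i) ∧ ∑ i, c i • μ i = 0 := by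
  classical
  let W := LinearMap.range (LinearMap.pi μ)
  have hdisj : Disjoint (stdSimplex ℝ ι) W := by
    refine Set.disjoint_left.mpr ?_
    rintro _ ⟨hnonneg, hsum⟩ ⟨v, rfl⟩
    have hv : v = 0 := h v hnonneg
    simp [hv] at hsum
  obtain ⟨f, u, u', hf_simplex, huu', hf_W⟩ := geometric_hahn_banach_compact_closed
    (convex_stdSimplex ℝ ι) (isCompact_stdSimplex ℝ ι) W.convex
    (Submodule.closed_of_finiteDimensional W) hdisj
  have hf_zero : ∀ v, f (LinearMap.pi μ v) = 0 := fun v =>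
    LinearMap.eq_zero_of_lt_apply_of_mem (f := (f : (ι → ℝ) →ₗ[ℝ] ℝ)) hf_W ⟨v, rfl⟩
  refine ⟨fun i => -f (Pi.single i 1), fun i => ?_, ?_⟩
  · have h0 := hf_W 0 W.zero_mem
    have hi := hf_simplex _ (single_mem_stdSimplex ℝ i)
    rw [map_zero] at h0
    linarith
  · ext v
    have hexpand : LinearMap.pi μ v = ∑ i, μ i v • Pi.single i (1 : ℝ) := by
      ext j
      simp [Pi.single_apply]
    simpa [hexpand, mul_comm] using hf_zero v

lemma exists_nonneg_sum_smul_eq_of_pos_sum_smul_eq_zero [Fintype ι] {M : Type*}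
    [AddCommGroup M] [Module ℝ M] {w : ι → M} {c : ι → ℝ} (hc : ∀ i, 0 < c i)
    (hrel : ∑ i, c i • w i = 0) {φ : M} (hφ : φ ∈ Submodule.span ℝ (Set.range w)) :
    ∃ a : ι → ℝ, (∀ i, 0 ≤ a i) ∧ φ = ∑ i, a i • w i := by
  obtain ⟨b, rfl⟩ := (Submodule.mem_span_range_iff_exists_fun ℝ).mp hφ
  set t := ∑ i, |b i| / c i
  refine ⟨fun i => b i + t * c i, fun i => ?_, ?_⟩
  · have hti : |b i| / c i ≤ t :=
      Finset.single_le_sum (fun j _ => div_nonneg (abs_nonneg (b j)) (hc j).le)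
        (Finset.mem_univ i)
    have : |b i| ≤ t * c i := (div_le_iff₀ (hc i)).mp hti
    linarith [neg_abs_le (b i)]
  · simp only [add_smul, mul_smul, Finset.sum_add_distrib, ← Finset.smul_sum, hrel, smul_zero,
      add_zero]

end

theorem polytope_nonneg_span_dual_general {V : Type*} [NormedAddCommGroup V] [NormedSpace ℝ V]
    {N : ℕ} (μ : Fin N → Module.Dual ℝ V)
    (hspan : Submodule.span ℝ (Set.range μ) = ⊤)
    (x : Fin N → ℝ) (P : Set V) (hP : P = {v : V | ∀ i, 0 ≤ μ i v + x i})
    (hne : P.Nonempty) (hbd : Bornology.IsBounded P) :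
    {φ : Module.Dual ℝ V | ∃ c : Fin N → ℝ, (∀ i, 0 ≤ c i) ∧ φ = ∑ i, c i • μ i}
      = Set.univ := by
  subst hP
  obtain ⟨c, hc, hrel⟩ := exists_pos_sum_smul_eq_zero μ fun _ hv =>
    eq_zero_of_forall_nonneg_of_isBounded_polyhedron (x := x) hne hbd hv
  exact Set.eq_univ_of_forall fun φ =>
    exists_nonneg_sum_smul_eq_of_pos_sum_smul_eq_zero hc hrel (hspan ▸ Submodule.mem_top)

/-- If the functionals `μ i` span the dual space and some polyhedron
`P(x)` is non-empty and bounded, then the non-negative span of the `μ i` is all of `V*`. -/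
theorem polytope_nonneg_span_dual {V : Type*} [NormedAddCommGroup V] [NormedSpace ℝ V]
    [FiniteDimensional ℝ V] {N : ℕ} (μ : Fin N → Module.Dual ℝ V)
    (hspan : Submodule.span ℝ (Set.range μ) = ⊤)
    (x : Fin N → ℝ) (P : Set V) (hP : P = {v : V | ∀ i, 0 ≤ μ i v + x i})
    (hne : P.Nonempty) (hbd : Bornology.IsBounded P) :
    {φ : Module.Dual ℝ V | ∃ c : Fin N → ℝ, (∀ i, 0 ≤ c i) ∧ φ = ∑ i, c i • μ i}
      = Set.univ :=
  polytope_nonneg_span_dual_general μ hspan x P hP hne hbd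
end

section
/- Let S be a linear subspace of a finite-dimensional real inner product space W, and H a hyperplane through 0 in W with S not contained in H. Then there is a constant κ > 0 (depending only on S and H) such that for every B > 0, any point within distance B of both S and H is within distance κ·B of S ∩ H. -/
/-!
Pick `s ∈ S` with `l s ≠ 0`. Sliding a point `p ∈ S` along `s` by `l p / l s` lands in `S ∩ ker l`
at distance `‖s‖ / |l s| · |l p|`, and `|l p| ≤ ‖l‖ (d(x, ker l) + d(x, p))`. Letting `p` range over
`S` bounds `d(x, S ∩ ker l)` by a linear combination of `d(x, S)` and `d(x, ker l)`.
-/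

open Metric

section
variable {𝕜 E : Type*} [NontriviallyNormedField 𝕜] [NormedAddCommGroup E] [NormedSpace 𝕜 E]

theorem ContinuousLinearMap.norm_apply_le_opNorm_mul_infDist_ker (f : E →L[𝕜] 𝕜) (x : E) :
    ‖f x‖ ≤ ‖f‖ * infDist x (LinearMap.ker f.toLinearMap : Set E) := by
  rcases (norm_nonneg f).eq_or_lt with hf | hf
  · rw [← hf, zero_mul, norm_le_zero_iff, norm_eq_zero.mp hf.symm, zero_apply]
  rw [← div_le_iff₀' hf, le_infDist ⟨0, zero_mem _⟩]
  intro y hy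
  rw [div_le_iff₀' hf, dist_eq_norm]
  calc ‖f x‖ = ‖f (x - y)‖ := by rw [map_sub, show f y = 0 from hy, sub_zero]
    _ ≤ ‖f‖ * ‖x - y‖ := f.le_opNorm _

theorem infDist_inf_ker_le_of_mem {S : Submodule 𝕜 E} {f : E →ₗ[𝕜] 𝕜} {s p : E}
    (hs : s ∈ S) (hfs : f s ≠ 0) (hp : p ∈ S) :
    infDist p (S ⊓ LinearMap.ker f : Set E) ≤ ‖s‖ / ‖f s‖ * ‖f p‖ := by
  have hmem : p - (f p / f s) • s ∈ S ⊓ LinearMap.ker f :=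
    ⟨S.sub_mem hp (S.smul_mem _ hs), by simp [hfs]⟩
  calc infDist p _ ≤ dist p (p - (f p / f s) • s) := infDist_le_dist_of_mem hmem
    _ = ‖s‖ / ‖f s‖ * ‖f p‖ := by
      rw [dist_eq_norm, sub_sub_cancel, norm_smul, norm_div]; ring

theorem infDist_inf_ker_le_add_dist {S : Submodule 𝕜 E} (f : E →L[𝕜] 𝕜) {s p : E}
    (hs : s ∈ S) (hfs : f s ≠ 0) (hp : p ∈ S) (x : E) :
    infDist x (S ⊓ LinearMap.ker f.toLinearMap : Set E) ≤
      (1 + ‖s‖ / ‖f s‖ * ‖f‖) * dist x p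
        + ‖s‖ / ‖f s‖ * ‖f‖ * infDist x (LinearMap.ker f.toLinearMap : Set E) := by
  have hfp : ‖f p‖ ≤ ‖f‖ * infDist x (LinearMap.ker f.toLinearMap : Set E) + ‖f‖ * dist x p :=
    calc ‖f p‖ ≤ ‖f x‖ + ‖f (p - x)‖ := by rw [map_sub]; exact norm_le_insert' _ _
      _ ≤ _ := by
        gcongr
        · exact f.norm_apply_le_opNorm_mul_infDist_ker x
        · rw [dist_eq_norm']; exact f.le_opNorm _
  calc infDist x _ ≤ infDist p (S ⊓ LinearMap.ker f.toLinearMap : Set E) + dist x p :=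
        infDist_le_infDist_add_dist
    _ ≤ ‖s‖ / ‖f s‖ * ‖f p‖ + dist x p := by
        gcongr; exact infDist_inf_ker_le_of_mem hs hfs hp
    _ ≤ _ := by
        have : 0 ≤ ‖s‖ / ‖f s‖ := by positivity
        nlinarith [mul_le_mul_of_nonneg_left hfp this]

theorem infDist_inf_ker_le {S : Submodule 𝕜 E} (f : E →L[𝕜] 𝕜) {s : E}
    (hs : s ∈ S) (hfs : f s ≠ 0) (x : E) :
    infDist x (S ⊓ LinearMap.ker f.toLinearMap : Set E) ≤
      (1 + ‖s‖ / ‖f s‖ * ‖f‖) * infDist x S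
        + ‖s‖ / ‖f s‖ * ‖f‖ * infDist x (LinearMap.ker f.toLinearMap : Set E) := by
  set c := ‖s‖ / ‖f s‖ * ‖f‖
  have hc : 0 < 1 + c := by positivity
  rw [← sub_le_iff_le_add, ← div_le_iff₀' hc, le_infDist ⟨0, S.zero_mem⟩]
  intro p hp
  rw [div_le_iff₀' hc, sub_le_iff_le_add]
  exact infDist_inf_ker_le_add_dist f hs hfs hp x

end

theorem near_subspace_and_hyperplane_near_intersection_general
    {W : Type*} [NormedAddCommGroup W] [InnerProductSpace ℝ W] [FiniteDimensional ℝ W]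
    (S : Submodule ℝ W) (l : Module.Dual ℝ W)
    (hSH : ¬ S ≤ LinearMap.ker l) :
    ∃ κ > (0 : ℝ), ∀ B > (0 : ℝ), ∀ x : W,
      Metric.infDist x (S : Set W) ≤ B →
      Metric.infDist x (LinearMap.ker l : Set W) ≤ B →
      Metric.infDist x ((S ⊓ LinearMap.ker l : Submodule ℝ W) : Set W) ≤ κ * B := by
  obtain ⟨s, hs, hls⟩ := SetLike.not_le_iff_exists.mp hSH
  set L := LinearMap.toContinuousLinearMap l
  set c := ‖s‖ / ‖L s‖ * ‖L‖
  refine ⟨1 + 2 * c, by positivity, fun B _ x hxS hxH => ?_⟩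
  have hc : 0 ≤ c := by positivity
  calc infDist x ((S ⊓ LinearMap.ker l : Submodule ℝ W) : Set W)
      ≤ (1 + c) * infDist x S + c * infDist x (LinearMap.ker l : Set W) :=
        infDist_inf_ker_le L hs hls x
    _ ≤ (1 + c) * B + c * B := by gcongr
    _ = (1 + 2 * c) * B := by ring

/-- If `S` is a subspace not contained in the hyperplane `H = ker l`,
there is `κ > 0` such that any point within distance `B` of both `S` and `H`
is within distance `κ·B` of `S ∩ H`. -/
theorem near_subspace_and_hyperplane_near_intersection
    {W : Type*} [NormedAddCommGroup W] [InnerProductSpace ℝ W] [FiniteDimensional ℝ W]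
    (S : Submodule ℝ W) (l : Module.Dual ℝ W) (hl : l ≠ 0)
    (hSH : ¬ S ≤ LinearMap.ker l) :
    ∃ κ > (0 : ℝ), ∀ B > (0 : ℝ), ∀ x : W,
      Metric.infDist x (S : Set W) ≤ B →
      Metric.infDist x (LinearMap.ker l : Set W) ≤ B →
      Metric.infDist x ((S ⊓ LinearMap.ker l : Submodule ℝ W) : Set W) ≤ κ * B :=
  near_subspace_and_hyperplane_near_intersection_general S l hSH
end

section
/- Let A be a convex set in ℝ^n and S an affine subspace that intersects the affine span of A but does not intersect A. Then every point of A at minimal distance from S lies on the relative boundary of A (the boundary of A within its affine span). -/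
/-!
If `a` were in the relative interior of `A`, one could move it slightly towards a point
`s ∈ S ∩ affineSpan A` and stay in `A`. Moving towards `s` shrinks the distance to the convex
set `S` by the factor `1 - t`, contradicting the minimality of `dist(a, S) > 0`.
-/

open Metric AffineMap Filter Topology

section

variable {E : Type*} [NormedAddCommGroup E] [NormedSpace ℝ E]

theorem dist_lineMap_lineMap_right (x y z : E) (t : ℝ) :
    dist (lineMap x z t) (lineMap y z t) = |1 - t| * dist x y := by
  rw [dist_eq_norm, dist_eq_norm, lineMap_apply_module, lineMap_apply_module,
    add_sub_add_right_eq_sub, ← smul_sub, norm_smul, Real.norm_eq_abs]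

theorem infDist_lineMap_le {S : Set E} (hS : Convex ℝ S) {s : E} (hs : s ∈ S) (x : E)
    {t : ℝ} (ht : t ∈ Set.Icc (0 : ℝ) 1) :
    infDist (lineMap x s t) S ≤ (1 - t) * infDist x S := by
  have : Nonempty S := ⟨⟨s, hs⟩⟩
  rw [infDist_eq_iInf (x := x), Real.mul_iInf_of_nonneg (by linarith [ht.2])]
  refine le_ciInf fun ⟨p, hp⟩ => ?_
  calc infDist (lineMap x s t) S ≤ dist (lineMap x s t) (lineMap p s t) :=
        infDist_le_dist_of_mem (hS.lineMap_mem hp hs ht)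
    _ = (1 - t) * dist x p := by
        rw [dist_lineMap_lineMap_right, abs_of_nonneg (by linarith [ht.2])]

theorem eventually_lineMap_mem_of_mem_intrinsicInterior {A : Set E} {a s : E}
    (ha : a ∈ intrinsicInterior ℝ A) (hs : s ∈ affineSpan ℝ A) :
    ∀ᶠ t in 𝓝 (0 : ℝ), lineMap a s t ∈ A := by
  obtain ⟨x, hx, rfl⟩ := mem_intrinsicInterior.1 ha
  let γ : ℝ → affineSpan ℝ A := fun t => ⟨lineMap (x : E) s t, AffineMap.lineMap_mem t x.2 hs⟩
  have hγ : Continuous γ := lineMap_continuous.subtype_mk _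
  have hγ0 : γ 0 = x := Subtype.ext (lineMap_apply_zero _ _)
  exact hγ.continuousAt.preimage_mem_nhds (hγ0 ▸ mem_interior_iff_mem_nhds.1 hx)

theorem exists_infDist_lt_of_mem_intrinsicInterior {A S : Set E} (hS : Convex ℝ S) {a s : E}
    (ha : a ∈ intrinsicInterior ℝ A) (hsS : s ∈ S) (hsA : s ∈ affineSpan ℝ A)
    (hpos : 0 < infDist a S) : ∃ b ∈ A, infDist b S < infDist a S := by
  obtain ⟨t, htA, ht0, ht1⟩ :=
    (((eventually_lineMap_mem_of_mem_intrinsicInterior ha hsA).filter_mono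
      nhdsWithin_le_nhds).and (Ioc_mem_nhdsGT zero_lt_one)).exists
  refine ⟨_, htA, ?_⟩
  calc infDist (lineMap a s t) S ≤ (1 - t) * infDist a S :=
        infDist_lineMap_le hS hsS a ⟨ht0.le, ht1⟩
    _ < infDist a S := by nlinarith

end

theorem closest_point_on_relative_boundary_general {n : ℕ}
    (A : Set (EuclideanSpace ℝ (Fin n)))
    (S : AffineSubspace ℝ (EuclideanSpace ℝ (Fin n)))
    (hSspan : ((S : Set (EuclideanSpace ℝ (Fin n))) ∩ (affineSpan ℝ A : Set (EuclideanSpace ℝ (Fin n)))).Nonempty)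
    (hSA : (S : Set (EuclideanSpace ℝ (Fin n))) ∩ A = ∅)
    (a : EuclideanSpace ℝ (Fin n)) (ha : a ∈ A)
    (hmin : ∀ b ∈ A, Metric.infDist a (S : Set (EuclideanSpace ℝ (Fin n)))
      ≤ Metric.infDist b (S : Set (EuclideanSpace ℝ (Fin n)))) :
    a ∈ intrinsicFrontier ℝ A := by
  obtain ⟨s, hsS, hsA⟩ := hSspan
  have haS : a ∉ (S : Set (EuclideanSpace ℝ (Fin n))) := fun h => hSA.subset ⟨h, ha⟩
  have hpos : 0 < infDist a S :=
    (S.closed_of_finiteDimensional.notMem_iff_infDist_pos ⟨s, hsS⟩).1 haS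
  rw [← intrinsicClosure_sdiff_intrinsicInterior]
  refine ⟨subset_intrinsicClosure ha, fun hint => ?_⟩
  obtain ⟨b, hbA, hlt⟩ := exists_infDist_lt_of_mem_intrinsicInterior S.convex hint hsS hsA hpos
  exact (hmin b hbA).not_gt hlt

/-- If an affine subspace `S` meets the affine span of a convex set `A`
but not `A` itself, then every point of `A` at minimal distance from `S` lies in the
relative (intrinsic) frontier of `A`. -/
theorem closest_point_on_relative_boundary {n : ℕ}
    (A : Set (EuclideanSpace ℝ (Fin n))) (hA : Convex ℝ A) (hAne : A.Nonempty)
    (S : AffineSubspace ℝ (EuclideanSpace ℝ (Fin n)))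
    (hSspan : ((S : Set (EuclideanSpace ℝ (Fin n))) ∩ (affineSpan ℝ A : Set (EuclideanSpace ℝ (Fin n)))).Nonempty)
    (hSA : (S : Set (EuclideanSpace ℝ (Fin n))) ∩ A = ∅)
    (a : EuclideanSpace ℝ (Fin n)) (ha : a ∈ A)
    (hmin : ∀ b ∈ A, Metric.infDist a (S : Set (EuclideanSpace ℝ (Fin n)))
      ≤ Metric.infDist b (S : Set (EuclideanSpace ℝ (Fin n)))) :
    a ∈ intrinsicFrontier ℝ A :=
  closest_point_on_relative_boundary_general A S hSspan hSA a ha hmin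
end

section
/- Let f : ℝ → ℂ be a Schwartz function. Then for every c > 0 there is a constant C such that for all T ≥ 0, | ∫_0^T ∑_{n ∈ ℤ} f(e^x n) dx − (T f(0) + ∫_0^∞ ∑_{n ∈ ℤ, n ≠ 0} f(e^x n) dx) | ≤ C e^{−cT}; in particular ∫_0^T ∑_{n∈ℤ} f(e^x n) dx − T·f(0) converges as T → ∞ to ∫_0^∞ ∑_{n≠0} f(e^x n) dx. -/
/-!
Split off the term `n = 0`, which contributes `T f(0)`. Since `|e^x n|^k |f(e^x n)|` is bounded
by a Schwartz seminorm, the remaining sum is `O(e^{-kx})` on `x ≥ 0` for every `k`: it is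
integrable on `(0, ∞)`, and the error in the statement is its integral over `(T, ∞)`, which is
`O(e^{-cT})` for every `c`.
-/

open scoped Topology SchwartzMap
open MeasureTheory Set Filter Real

variable {E : Type*} [NormedAddCommGroup E] [NormedSpace ℝ E]

lemma SchwartzMap.norm_apply_exp_mul_intCast_le (f : 𝓢(ℝ, E)) (k : ℕ) (x : ℝ) {n : ℤ}
    (hn : n ≠ 0) :
    ‖f (exp x * n)‖ ≤ SchwartzMap.seminorm ℝ k 0 f * exp (-k * x) * (|(n : ℝ)| ^ k)⁻¹ := by
  have hy : ‖exp x * (n : ℝ)‖ = exp x * |(n : ℝ)| := by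
    rw [Real.norm_eq_abs, abs_mul, abs_of_pos (exp_pos x)]
  have h := f.norm_pow_mul_le_seminorm ℝ k (exp x * n)
  rw [hy, ← le_div_iff₀' (by positivity)] at h
  refine h.trans_eq ?_
  rw [mul_pow, ← exp_nat_mul, neg_mul, exp_neg]
  field_simp

lemma summable_inv_abs_intCast_pow {k : ℕ} (hk : 1 < k) :
    Summable fun n : ℤ => (|(n : ℝ)| ^ k)⁻¹ := by
  simpa [abs_inv, abs_pow] using (Real.summable_one_div_int_pow.mpr hk).abs

lemma norm_setIntegral_Ioi_le_of_norm_le_exp {g : ℝ → E} {B c T : ℝ} (hc : 0 < c)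
    (hg : ∀ x > T, ‖g x‖ ≤ B * exp (-c * x)) :
    ‖∫ x in Ioi T, g x‖ ≤ B / c * exp (-c * T) := by
  refine (norm_integral_le_of_norm_le ((exp_neg_integrableOn_Ioi T hc).const_mul B)
    (ae_restrict_of_forall_mem measurableSet_Ioi hg)).trans_eq ?_
  rw [integral_const_mul, integral_exp_mul_Ioi (neg_lt_zero.mpr hc)]
  field_simp

namespace SchwartzMap

noncomputable def nonzeroThetaSum (f : 𝓢(ℝ, E)) (x : ℝ) : E :=
  ∑' n : {m : ℤ // m ≠ 0}, f (exp x * ((n : ℤ) : ℝ))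

variable (f : 𝓢(ℝ, E))

lemma norm_nonzeroThetaSum_le {k : ℕ} (hk : 1 < k) (x : ℝ) :
    ‖f.nonzeroThetaSum x‖ ≤
      SchwartzMap.seminorm ℝ k 0 f * exp (-k * x) *
        ∑' n : {m : ℤ // m ≠ 0}, (|((n : ℤ) : ℝ)| ^ k)⁻¹ :=
  tsum_of_norm_bounded (((summable_inv_abs_intCast_pow hk).subtype _).hasSum.mul_left _)
    fun n => f.norm_apply_exp_mul_intCast_le k x n.2

lemma exists_norm_nonzeroThetaSum_le_exp (c : ℝ) :
    ∃ B, ∀ x, 0 ≤ x → ‖f.nonzeroThetaSum x‖ ≤ B * exp (-c * x) := by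
  set k := ⌈c⌉₊ + 2
  have hk : 1 < k := by omega
  have hck : c ≤ k := by push_cast [k]; linarith [Nat.le_ceil c]
  refine ⟨SchwartzMap.seminorm ℝ k 0 f * ∑' n : {m : ℤ // m ≠ 0}, (|((n : ℤ) : ℝ)| ^ k)⁻¹,
    fun x hx => (f.norm_nonzeroThetaSum_le hk x).trans ?_⟩
  rw [mul_right_comm]
  gcongr

lemma summable_nonzeroThetaSum [CompleteSpace E] (x : ℝ) :
    Summable fun n : {m : ℤ // m ≠ 0} => f (exp x * ((n : ℤ) : ℝ)) :=
  .of_norm_bounded (((summable_inv_abs_intCast_pow one_lt_two).subtype _).mul_left _)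
    fun n => f.norm_apply_exp_mul_intCast_le 2 x n.2

lemma tsum_eq_add_nonzeroThetaSum [CompleteSpace E] (x : ℝ) :
    ∑' n : ℤ, f (exp x * n) = f 0 + f.nonzeroThetaSum x := by
  have hsum := ((finite_singleton (0 : ℤ)).summable_compl_iff
    (f := fun n : ℤ => f (exp x * n))).mp (f.summable_nonzeroThetaSum x)
  rw [← hsum.tsum_subtype_add_tsum_subtype_compl {0}, tsum_singleton 0 fun n : ℤ => f (exp x * n),
    Int.cast_zero, mul_zero]
  rfl

lemma continuousOn_nonzeroThetaSum [CompleteSpace E] :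
    ContinuousOn f.nonzeroThetaSum (Ici 0) := by
  refine continuousOn_tsum (fun n => by fun_prop)
    (((summable_inv_abs_intCast_pow one_lt_two).subtype _).mul_left (SchwartzMap.seminorm ℝ 2 0 f))
    fun n x hx => (f.norm_apply_exp_mul_intCast_le 2 x n.2).trans ?_
  have hexp : exp (-(2 : ℕ) * x) ≤ 1 := exp_le_one_iff.mpr (by push_cast; linarith [mem_Ici.mp hx])
  exact mul_le_mul_of_nonneg_right (mul_le_of_le_one_right (by positivity) hexp) (by positivity)

lemma integrableOn_nonzeroThetaSum_Ioi [CompleteSpace E] :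
    IntegrableOn f.nonzeroThetaSum (Ioi 0) := by
  obtain ⟨B, hB⟩ := f.exists_norm_nonzeroThetaSum_le_exp 1
  refine Integrable.mono' ((exp_neg_integrableOn_Ioi 0 one_pos).const_mul B)
    ((f.continuousOn_nonzeroThetaSum.mono Ioi_subset_Ici_self).aestronglyMeasurable
      measurableSet_Ioi) ?_
  exact ae_restrict_of_forall_mem measurableSet_Ioi fun x hx => hB x (le_of_lt hx)

lemma intervalIntegral_thetaSum_sub_eq_neg_integral_Ioi [CompleteSpace E] {T : ℝ} (hT : 0 ≤ T) :
    (∫ x in (0 : ℝ)..T, ∑' n : ℤ, f (exp x * n)) - (T • f 0 + ∫ x in Ioi 0, f.nonzeroThetaSum x)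
      = -∫ x in Ioi T, f.nonzeroThetaSum x := by
  have hInt := f.integrableOn_nonzeroThetaSum_Ioi
  have hIntT : IntervalIntegrable f.nonzeroThetaSum volume 0 T :=
    (intervalIntegrable_iff_integrableOn_Ioc_of_le hT).mpr (hInt.mono_set Ioc_subset_Ioi_self)
  simp_rw [f.tsum_eq_add_nonzeroThetaSum]
  rw [intervalIntegral.integral_add intervalIntegrable_const hIntT, intervalIntegral.integral_const,
    ← intervalIntegral.integral_interval_add_Ioi hInt (hInt.mono_set (Ioi_subset_Ioi hT)), sub_zero]
  abel

theorem norm_intervalIntegral_thetaSum_sub_le [CompleteSpace E] {c : ℝ} (hc : 0 < c) :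
    ∃ C, ∀ T, 0 ≤ T →
      ‖(∫ x in (0 : ℝ)..T, ∑' n : ℤ, f (exp x * n))
        - (T • f 0 + ∫ x in Ioi 0, f.nonzeroThetaSum x)‖ ≤ C * exp (-c * T) := by
  obtain ⟨B, hB⟩ := f.exists_norm_nonzeroThetaSum_le_exp c
  refine ⟨B / c, fun T hT => ?_⟩
  rw [f.intervalIntegral_thetaSum_sub_eq_neg_integral_Ioi hT, norm_neg]
  exact norm_setIntegral_Ioi_le_of_norm_le_exp hc fun x hx => hB x (hT.trans hx.le)

theorem tendsto_intervalIntegral_thetaSum_sub [CompleteSpace E] :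
    Tendsto (fun T : ℝ => (∫ x in (0 : ℝ)..T, ∑' n : ℤ, f (exp x * n)) - T • f 0) atTop
      (𝓝 (∫ x in Ioi 0, f.nonzeroThetaSum x)) := by
  obtain ⟨C, hC⟩ := f.norm_intervalIntegral_thetaSum_sub_le one_pos
  rw [← tendsto_sub_nhds_zero_iff]
  refine squeeze_zero_norm' ?_ (by simpa using tendsto_exp_neg_atTop_nhds_zero.const_mul C)
  filter_upwards [eventually_ge_atTop 0] with T hT
  simpa only [sub_sub, neg_one_mul] using hC T hT

end SchwartzMap

/-- For a Schwartz function `f` on `ℝ`, the truncated integral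
`∫_0^T ∑_{n∈ℤ} f(e^x n) dx` differs from `T·f(0) + ∫_0^∞ ∑_{n≠0} f(e^x n) dx` by
`O(e^{-cT})` for every `c > 0`; in particular it minus `T·f(0)` converges as `T → ∞`. -/
theorem truncated_theta_integral_positive_cone (f : SchwartzMap ℝ ℂ) :
    (∀ c > (0 : ℝ), ∃ C : ℝ, ∀ T : ℝ, 0 ≤ T →
      ‖(∫ x in (0 : ℝ)..T, ∑' n : ℤ, f (Real.exp x * (n : ℝ)))
        - ((T : ℂ) * f 0
          + ∫ x in Set.Ioi (0 : ℝ),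
              ∑' n : {m : ℤ // m ≠ 0}, f (Real.exp x * ((n : ℤ) : ℝ)))‖
        ≤ C * Real.exp (-c * T)) ∧
    Filter.Tendsto
      (fun T : ℝ =>
        (∫ x in (0 : ℝ)..T, ∑' n : ℤ, f (Real.exp x * (n : ℝ))) - (T : ℂ) * f 0)
      Filter.atTop
      (𝓝 (∫ x in Set.Ioi (0 : ℝ),
            ∑' n : {m : ℤ // m ≠ 0}, f (Real.exp x * ((n : ℤ) : ℝ)))) := by
  refine ⟨fun c hc => ?_, ?_⟩
  · simpa only [Complex.real_smul, SchwartzMap.nonzeroThetaSum]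
      using f.norm_intervalIntegral_thetaSum_sub_le hc
  · simpa only [Complex.real_smul, SchwartzMap.nonzeroThetaSum]
      using f.tendsto_intervalIntegral_thetaSum_sub
end
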